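/- arXiv:2203.16663 — 3 statements merged into one kernel-verified Lean document; each statement's English description precedes it below -/
import Mathlib

section
/- Let U be a finite nonempty set of users and c₀ : U → ℝ a function of original reputation scores. Let k ≥ 1 and, for each j = 1,…,k, let f_j : U → A_j be an attribute map into a finite set A_j of classes. For each k-tuple l = (a_1,…,a_k) ∈ A_1 × … × A_k, let U(l) = {u ∈ U : f_j(u) = a_j for all j} be the corresponding joint demographic cell, and for nonempty cells let μ_l and σ_l denote the mean and (population) standard deviation of c₀ over U(l); assume σ_l ≠ 0 for every nonempty cell. Fix real numbers μ and σ and define adjusted reputations c(u) = μ + (c₀(u) − μ_{l(u)}) · σ / σ_{l(u)}, where l(u) is the joint cell containing u. Then for any attribute indices i, j ∈ {1,…,k} and any classes a ∈ A_i and a′ ∈ A_j such that the marginal groups U(a) = {u : f_i(u) = a} and U(a′) = {u : f_j(u) = a′} are nonempty, the average of c over U(a) equals the average of c over U(a′), and both equal μ; in particular the disparate reputation Δ(a, a′) = avg_{U(a)} c − avg_{U(a′)} c is zero. -/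
/-- Average of `c` over a finite set `S`. -/
noncomputable def avg {α : Type*} (S : Finset α) (c : α → ℝ) : ℝ :=
  (∑ u ∈ S, c u) / (S.card : ℝ)

/-- Population standard deviation of `c` over a finite set `S`. -/
noncomputable def std {α : Type*} (S : Finset α) (c : α → ℝ) : ℝ :=
  Real.sqrt ((∑ u ∈ S, (c u - avg S c) ^ 2) / (S.card : ℝ))

/-- Theorem 1, multi-attribute reputation independence: after the
per-joint-cell affine rescaling `c u = μ + (c₀ u - μ_{l(u)}) * σ / σ_{l(u)}`, any two
nonempty marginal groups `{u : f i u = a}` and `{u : f j u = a'}` (for any classes of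
any attributes) have the same average reputation, namely `μ`; in particular the
disparate reputation `Δ(a, a')` is zero. -/
theorem multi_attribute_reputation_independence
    {U : Type*} [Fintype U] [Nonempty U]
    (c₀ : U → ℝ)
    (k : ℕ) (hk : 1 ≤ k)
    (A : Fin k → Type*) [∀ j, Fintype (A j)] [∀ j, DecidableEq (A j)]
    (f : (j : Fin k) → U → A j)
    (cell : ((j : Fin k) → A j) → Finset U)
    (hcell : ∀ l, cell l = Finset.univ.filter (fun u => ∀ j, f j u = l j))
    (μl σl : ((j : Fin k) → A j) → ℝ)
    (hμl : ∀ l, μl l = avg (cell l) c₀)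
    (hσl : ∀ l, σl l = std (cell l) c₀)
    (hσne : ∀ l, (cell l).Nonempty → σl l ≠ 0)
    (μ σ : ℝ)
    (c : U → ℝ)
    (hc : ∀ u, c u = μ + (c₀ u - μl (fun j => f j u)) * σ / σl (fun j => f j u))
    (i j : Fin k) (a : A i) (a' : A j)
    (Ga Ga' : Finset U)
    (hGa : Ga = Finset.univ.filter (fun u => f i u = a))
    (hGa' : Ga' = Finset.univ.filter (fun u => f j u = a'))
    (hne : Ga.Nonempty) (hne' : Ga'.Nonempty) :
    avg Ga c = μ ∧ avg Ga' c = μ ∧ avg Ga c - avg Ga' c = 0 := by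

  classical
  have cellsum : ∀ l, ∑ u ∈ cell l, (c₀ u - μl l) = 0 := by
    intro l
    rcases (cell l).eq_empty_or_nonempty with h | h
    · simp [h]
    · have hcard : ((cell l).card : ℝ) ≠ 0 := by
        exact_mod_cast Finset.card_ne_zero.mpr h
      rw [Finset.sum_sub_distrib, Finset.sum_const, hμl, avg, nsmul_eq_mul]
      field_simp
      ring
  have key : ∀ (i : Fin k) (a : A i) (G : Finset U),
      G = Finset.univ.filter (fun u => f i u = a) → G.Nonempty → avg G c = μ := by
    intro i a G hG hGne
    have hsum : ∑ u ∈ G, (c u - μ) = 0 := by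
      rw [← Finset.sum_fiberwise G (fun u => (fun j => f j u)) (fun u => c u - μ)]
      apply Finset.sum_eq_zero
      intro l _
      by_cases hla : l i = a
      · have hfib : G.filter (fun u => (fun j => f j u) = l) = cell l := by
          ext u
          simp only [hG, hcell, Finset.mem_filter, Finset.mem_univ, true_and, funext_iff]
          constructor
          · rintro ⟨_, h2⟩; exact h2
          · intro h2; exact ⟨(h2 i).trans hla, h2⟩
        rw [hfib]
        have hterm : ∀ u ∈ cell l, c u - μ = (c₀ u - μl l) * (σ / σl l) := by
          intro u hu
          have hul : (fun j => f j u) = l := by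
            funext j'
            rw [hcell] at hu
            simp only [Finset.mem_filter] at hu
            exact hu.2 j'
          rw [hc u, hul]; ring
        rw [Finset.sum_congr rfl hterm, ← Finset.sum_mul, cellsum l, zero_mul]
      · have hfib : G.filter (fun u => (fun j => f j u) = l) = ∅ := by
          ext u
          simp only [hG, Finset.mem_filter, Finset.mem_univ, true_and, funext_iff,
            Finset.notMem_empty, iff_false, not_and]
          intro hfa h2
          exact hla ((h2 i) ▸ hfa)
        simp [hfib]
    have hcard : (G.card : ℝ) ≠ 0 := by
      exact_mod_cast Finset.card_ne_zero.mpr hGne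
    rw [Finset.sum_sub_distrib, Finset.sum_const, nsmul_eq_mul, sub_eq_zero] at hsum
    rw [avg, hsum]
    field_simp
  have h1 := key i a Ga hGa hne
  have h2 := key j a' Ga' hGa' hne'
  exact ⟨h1, h2, by rw [h1, h2, sub_self]⟩
end

section
/- Let U be a finite nonempty set of users and I a finite set of items, with ratings R : U × I → ℝ such that whenever user u rated item i the rating satisfies R_min ≤ R(u,i) ≤ R_max, where Δ_R = R_max − R_min ≥ 0. For each item i let U_i ⊆ U be the nonempty set of users who rated i, and suppose each ranking r_i is a weighted average of the ratings of i, i.e., r_i = Σ_{u∈U_i} w_u R(u,i) / Σ_{u∈U_i} w_u with weights w_u ≥ 0 not all zero (so that r_i ∈ [R_min, R_max]). For λ ∈ (0,1), define each user's reputation by c(u) = 1 − (λ/|I_u|) Σ_{i∈I_u} |R(u,i) − r_i|, where I_u is the nonempty set of items that u rated. Then 1 − λΔ_R ≤ c(u) ≤ 1 for every user u, and consequently, for any two nonempty groups of users G and G′, the disparate reputation Δ(G, G′) = avg(G, c) − avg(G′, c) satisfies −λΔ_R ≤ Δ(G, G′) ≤ λΔ_R. -/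
lemma avg_le_of_le {α : Type*} {S : Finset α} (hS : S.Nonempty) {c : α → ℝ} {b : ℝ}
    (h : ∀ u ∈ S, c u ≤ b) : avg S c ≤ b := by
  have hcard : (0:ℝ) < S.card := by exact_mod_cast Finset.card_pos.mpr hS
  rw [avg, div_le_iff₀ hcard]
  calc ∑ u ∈ S, c u ≤ ∑ _u ∈ S, b := Finset.sum_le_sum h
    _ = b * S.card := by rw [Finset.sum_const, nsmul_eq_mul, mul_comm]

lemma le_avg_of_le {α : Type*} {S : Finset α} (hS : S.Nonempty) {c : α → ℝ} {a : ℝ}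
    (h : ∀ u ∈ S, a ≤ c u) : a ≤ avg S c := by
  have hcard : (0:ℝ) < S.card := by exact_mod_cast Finset.card_pos.mpr hS
  rw [avg, le_div_iff₀ hcard]
  calc a * S.card = ∑ _u ∈ S, a := by rw [Finset.sum_const, nsmul_eq_mul, mul_comm]
    _ ≤ ∑ u ∈ S, c u := Finset.sum_le_sum h

/-- in a reputation-based ranking system where each item's ranking is a
nonnegatively-weighted average of its ratings (all ratings lying in `[Rmin, Rmax]`)
and each user's reputation is `c u = 1 - (λ/|I_u|) ∑_{i ∈ I_u} |R u i - r i|` with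
`λ ∈ (0,1)`, every reputation lies in `[1 - λΔ_R, 1]`, and hence the disparate
reputation between any two nonempty user groups lies in `[-λΔ_R, λΔ_R]`. -/
theorem disparate_reputation_bounded
    {U I : Type*} [Fintype U] [Nonempty U] [Fintype I]
    (R : U → I → ℝ) (Rmin Rmax ΔR : ℝ)
    (hΔR : ΔR = Rmax - Rmin) (hΔR0 : 0 ≤ ΔR)
    (Ui : I → Finset U) (Iu : U → Finset I)
    (hUine : ∀ i, (Ui i).Nonempty) (hIune : ∀ u, (Iu u).Nonempty)
    (hcon : ∀ u i, u ∈ Ui i ↔ i ∈ Iu u)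
    (hR : ∀ u i, u ∈ Ui i → Rmin ≤ R u i ∧ R u i ≤ Rmax)
    (w : U → ℝ) (hw : ∀ u, 0 ≤ w u)
    (hwpos : ∀ i, 0 < ∑ u ∈ Ui i, w u)
    (r : I → ℝ)
    (hr : ∀ i, r i = (∑ u ∈ Ui i, w u * R u i) / (∑ u ∈ Ui i, w u))
    (lam : ℝ) (hlam0 : 0 < lam) (hlam1 : lam < 1)
    (c : U → ℝ)
    (hc : ∀ u, c u = 1 - (lam / ((Iu u).card : ℝ)) * ∑ i ∈ Iu u, |R u i - r i|) :
    (∀ u, 1 - lam * ΔR ≤ c u ∧ c u ≤ 1) ∧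
    ∀ (G G' : Finset U), G.Nonempty → G'.Nonempty →
      -(lam * ΔR) ≤ avg G c - avg G' c ∧ avg G c - avg G' c ≤ lam * ΔR := by
  have hrng : ∀ i, Rmin ≤ r i ∧ r i ≤ Rmax := by
    intro i
    rw [hr i]
    constructor
    · rw [le_div_iff₀ (hwpos i)]
      calc Rmin * ∑ u ∈ Ui i, w u = ∑ u ∈ Ui i, w u * Rmin := by
            rw [Finset.mul_sum]; exact Finset.sum_congr rfl fun u _ => mul_comm _ _
        _ ≤ ∑ u ∈ Ui i, w u * R u i :=
            Finset.sum_le_sum fun u hu => mul_le_mul_of_nonneg_left (hR u i hu).1 (hw u)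
    · rw [div_le_iff₀ (hwpos i)]
      calc ∑ u ∈ Ui i, w u * R u i ≤ ∑ u ∈ Ui i, w u * Rmax :=
            Finset.sum_le_sum fun u hu => mul_le_mul_of_nonneg_left (hR u i hu).2 (hw u)
        _ = Rmax * ∑ u ∈ Ui i, w u := by
            rw [Finset.mul_sum]; exact Finset.sum_congr rfl fun u _ => mul_comm _ _
  have hcb : ∀ u, 1 - lam * ΔR ≤ c u ∧ c u ≤ 1 := by
    intro u
    have hcard : (0:ℝ) < (Iu u).card := by exact_mod_cast Finset.card_pos.mpr (hIune u)
    have hcoef : 0 ≤ lam / ((Iu u).card : ℝ) := div_nonneg hlam0.le hcard.le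
    have habs : ∀ i ∈ Iu u, |R u i - r i| ≤ ΔR := by
      intro i hi
      have hu : u ∈ Ui i := (hcon u i).mpr hi
      have h1 := hR u i hu
      have h2 := hrng i
      rw [abs_sub_le_iff]
      constructor <;> [skip; skip] <;> rw [hΔR] <;> linarith [h1.1, h1.2, h2.1, h2.2]
    constructor
    · rw [hc u]
      have : (lam / ((Iu u).card : ℝ)) * ∑ i ∈ Iu u, |R u i - r i|
          ≤ (lam / ((Iu u).card : ℝ)) * ((Iu u).card * ΔR) := by
        apply mul_le_mul_of_nonneg_left _ hcoef
        calc ∑ i ∈ Iu u, |R u i - r i| ≤ ∑ _i ∈ Iu u, ΔR := Finset.sum_le_sum habs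
          _ = (Iu u).card * ΔR := by rw [Finset.sum_const, nsmul_eq_mul]
      have heq : (lam / ((Iu u).card : ℝ)) * ((Iu u).card * ΔR) = lam * ΔR := by
        field_simp
      linarith [this, heq ▸ this]
    · rw [hc u]
      have : 0 ≤ (lam / ((Iu u).card : ℝ)) * ∑ i ∈ Iu u, |R u i - r i| :=
        mul_nonneg hcoef (Finset.sum_nonneg fun i _ => abs_nonneg _)
      linarith
  refine ⟨hcb, fun G G' hG hG' => ?_⟩
  have h1 : 1 - lam * ΔR ≤ avg G c := le_avg_of_le hG fun u _ => (hcb u).1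
  have h2 : avg G c ≤ 1 := avg_le_of_le hG fun u _ => (hcb u).2
  have h3 : 1 - lam * ΔR ≤ avg G' c := le_avg_of_le hG' fun u _ => (hcb u).1
  have h4 : avg G' c ≤ 1 := avg_le_of_le hG' fun u _ => (hcb u).2
  constructor <;> linarith
end

section
/- There exist a finite nonempty set of users U, reputation scores c₀ : U → ℝ, and two attribute maps f : U → A and g : U → B into finite class sets, such that: every nonempty class of f (respectively of g) has nonzero standard deviation of the reputations entering the corresponding adjustment step; and after applying the single-attribute adjustment sequentially — first replacing c₀ by c₁(u) = μ₀ + (c₀(u) − μ_{f(u)}) · σ₀ / σ_{f(u)} (where μ₀, σ₀ are the overall mean and standard deviation of c₀ over U, and μ_a, σ_a are the mean and standard deviation of c₀ over the class {u : f(u) = a}), and then replacing c₁ by c₂(u) = μ₁ + (c₁(u) − μ'_{g(u)}) · σ₁ / σ'_{g(u)} (where μ₁, σ₁ are the overall mean and standard deviation of c₁ over U, and μ'_b, σ'_b are the mean and standard deviation of c₁ over the class {u : g(u) = b}) — there exist two nonempty classes a, a′ of f whose averages of the final reputations c₂ differ: avg({u : f(u)=a}, c₂) ≠ avg({u : f(u)=a′},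 c₂). -/
noncomputable def C0 : Fin 6 → ℝ := ![1,0,3,3,4,4]
noncomputable def C2 : Fin 6 → ℝ := ![4,1,1,1,4,4]
def F6 : Fin 6 → Fin 2 := ![0,1,1,1,0,1]
def G6 : Fin 6 → Fin 2 := ![0,0,1,1,1,1]

@[simp] lemma C0_0 : C0 0 = 1 := rfl
@[simp] lemma C0_1 : C0 1 = 0 := rfl
@[simp] lemma C0_2 : C0 2 = 3 := rfl
@[simp] lemma C0_3 : C0 3 = 3 := rfl
@[simp] lemma C0_4 : C0 4 = 4 := rfl
@[simp] lemma C0_5 : C0 5 = 4 := rfl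
@[simp] lemma C2_0 : C2 0 = 4 := rfl
@[simp] lemma C2_1 : C2 1 = 1 := rfl
@[simp] lemma C2_2 : C2 2 = 1 := rfl
@[simp] lemma C2_3 : C2 3 = 1 := rfl
@[simp] lemma C2_4 : C2 4 = 4 := rfl
@[simp] lemma C2_5 : C2 5 = 4 := rfl
@[simp] lemma F6_0 : F6 0 = 0 := rfl
@[simp] lemma F6_1 : F6 1 = 1 := rfl
@[simp] lemma F6_2 : F6 2 = 1 := rfl
@[simp] lemma F6_3 : F6 3 = 1 := rfl
@[simp] lemma F6_4 : F6 4 = 0 := rfl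
@[simp] lemma F6_5 : F6 5 = 1 := rfl
@[simp] lemma G6_0 : G6 0 = 0 := rfl
@[simp] lemma G6_1 : G6 1 = 0 := rfl
@[simp] lemma G6_2 : G6 2 = 1 := rfl
@[simp] lemma G6_3 : G6 3 = 1 := rfl
@[simp] lemma G6_4 : G6 4 = 1 := rfl
@[simp] lemma G6_5 : G6 5 = 1 := rfl

lemma std_eq' {α : Type*} (S : Finset α) (c : α → ℝ) (v : ℝ) (hv : 0 ≤ v)
    (h : (∑ u ∈ S, (c u - avg S c) ^ 2) / (S.card : ℝ) = v ^ 2) : std S c = v := by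
  rw [std, h, Real.sqrt_sq hv]

lemma cardF0 : (Finset.univ.filter (fun v => F6 v = (0 : Fin 2))).card = 2 := by decide
lemma cardF1 : (Finset.univ.filter (fun v => F6 v = (1 : Fin 2))).card = 4 := by decide
lemma cardG0 : (Finset.univ.filter (fun v => G6 v = (0 : Fin 2))).card = 2 := by decide
lemma cardG1 : (Finset.univ.filter (fun v => G6 v = (1 : Fin 2))).card = 4 := by decide

lemma avgU : avg Finset.univ C0 = 5 / 2 := by
  norm_num [avg, Fin.sum_univ_six]

lemma stdU : std Finset.univ C0 = 3 / 2 := by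
  apply std_eq' _ _ _ (by norm_num)
  rw [avgU]; norm_num [Fin.sum_univ_six]

lemma avgF0 : avg (Finset.univ.filter (fun v => F6 v = (0 : Fin 2))) C0 = 5 / 2 := by
  norm_num [avg, cardF0, Finset.sum_filter, Fin.sum_univ_six]

lemma stdF0 : std (Finset.univ.filter (fun v => F6 v = (0 : Fin 2))) C0 = 3 / 2 := by
  apply std_eq' _ _ _ (by norm_num)
  rw [avgF0]; norm_num [cardF0, Finset.sum_filter, Fin.sum_univ_six]

lemma avgF1 : avg (Finset.univ.filter (fun v => F6 v = (1 : Fin 2))) C0 = 5 / 2 := by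
  norm_num [avg, cardF1, Finset.sum_filter, Fin.sum_univ_six]

lemma stdF1 : std (Finset.univ.filter (fun v => F6 v = (1 : Fin 2))) C0 = 3 / 2 := by
  apply std_eq' _ _ _ (by norm_num)
  rw [avgF1]; norm_num [cardF1, Finset.sum_filter, Fin.sum_univ_six]

lemma avgG0 : avg (Finset.univ.filter (fun v => G6 v = (0 : Fin 2))) C0 = 1 / 2 := by
  norm_num [avg, cardG0, Finset.sum_filter, Fin.sum_univ_six]

lemma stdG0 : std (Finset.univ.filter (fun v => G6 v = (0 : Fin 2))) C0 = 1 / 2 := by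
  apply std_eq' _ _ _ (by norm_num)
  rw [avgG0]; norm_num [cardG0, Finset.sum_filter, Fin.sum_univ_six]

lemma avgG1 : avg (Finset.univ.filter (fun v => G6 v = (1 : Fin 2))) C0 = 7 / 2 := by
  norm_num [avg, cardG1, Finset.sum_filter, Fin.sum_univ_six]

lemma stdG1 : std (Finset.univ.filter (fun v => G6 v = (1 : Fin 2))) C0 = 1 / 2 := by
  apply std_eq' _ _ _ (by norm_num)
  rw [avgG1]; norm_num [cardG1, Finset.sum_filter, Fin.sum_univ_six]

lemma avgF0C2 : avg (Finset.univ.filter (fun v => F6 v = (0 : Fin 2))) C2 = 4 := by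
  norm_num [avg, cardF0, Finset.sum_filter, Fin.sum_univ_six]

lemma avgF1C2 : avg (Finset.univ.filter (fun v => F6 v = (1 : Fin 2))) C2 = 7 / 4 := by
  norm_num [avg, cardF1, Finset.sum_filter, Fin.sum_univ_six]

lemma main_example :
      (∀ a : Fin 2, (Finset.univ.filter (fun u => F6 u = a)).Nonempty →
        std (Finset.univ.filter (fun u => F6 u = a)) C0 ≠ 0) ∧
      (∀ u : Fin 6, C0 u = avg Finset.univ C0 +
        (C0 u - avg (Finset.univ.filter (fun v => F6 v = F6 u)) C0) *
          std Finset.univ C0 / std (Finset.univ.filter (fun v => F6 v = F6 u)) C0) ∧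
      (∀ b : Fin 2, (Finset.univ.filter (fun u => G6 u = b)).Nonempty →
        std (Finset.univ.filter (fun u => G6 u = b)) C0 ≠ 0) ∧
      (∀ u : Fin 6, C2 u = avg Finset.univ C0 +
        (C0 u - avg (Finset.univ.filter (fun v => G6 v = G6 u)) C0) *
          std Finset.univ C0 / std (Finset.univ.filter (fun v => G6 v = G6 u)) C0) ∧
      ∃ a a' : Fin 2,
        (Finset.univ.filter (fun u => F6 u = a)).Nonempty ∧
        (Finset.univ.filter (fun u => F6 u = a')).Nonempty ∧
        avg (Finset.univ.filter (fun u => F6 u = a)) C2 ≠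
          avg (Finset.univ.filter (fun u => F6 u = a')) C2 := by
  have hf2 : ∀ u, F6 u = 0 ∨ F6 u = 1 := by decide
  have hg2 : ∀ u, G6 u = 0 ∨ G6 u = 1 := by decide
  have hkey : ∀ u, (G6 u = 0 ∧ C2 u = 3 * C0 u + 1) ∨ (G6 u = 1 ∧ C2 u = 3 * C0 u - 8) := by
    intro u
    fin_cases u
    · exact Or.inl ⟨rfl, show C2 0 = 3 * C0 0 + 1 by norm_num⟩
    · exact Or.inl ⟨rfl, show C2 1 = 3 * C0 1 + 1 by norm_num⟩
    · exact Or.inr ⟨rfl, show C2 2 = 3 * C0 2 - 8 by norm_num⟩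
    · exact Or.inr ⟨rfl, show C2 3 = 3 * C0 3 - 8 by norm_num⟩
    · exact Or.inr ⟨rfl, show C2 4 = 3 * C0 4 - 8 by norm_num⟩
    · exact Or.inr ⟨rfl, show C2 5 = 3 * C0 5 - 8 by norm_num⟩
  refine ⟨?_, ?_, ?_, ?_, 0, 1, ?_, ?_, ?_⟩
  · intro a _
    rcases (by omega : (a : ℕ) = 0 ∨ (a : ℕ) = 1) with h | h
    · have ha : a = 0 := Fin.ext h
      rw [ha, stdF0]; norm_num
    · have ha : a = 1 := Fin.ext h
      rw [ha, stdF1]; norm_num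
  · intro u
    rcases hf2 u with h | h <;>
      simp only [h, avgU, stdU, avgF0, stdF0, avgF1, stdF1] <;> ring
  · intro b _
    rcases (by omega : (b : ℕ) = 0 ∨ (b : ℕ) = 1) with h | h
    · have hb : b = 0 := Fin.ext h
      rw [hb, stdG0]; norm_num
    · have hb : b = 1 := Fin.ext h
      rw [hb, stdG1]; norm_num
  · intro u
    rcases hkey u with ⟨h, hv⟩ | ⟨h, hv⟩ <;>
      simp only [h, hv, avgU, stdU, avgG0, stdG0, avgG1, stdG1] <;> ring
  · exact ⟨0, by decide⟩
  · exact ⟨1, by decide⟩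
  · rw [avgF0C2, avgF1C2]; norm_num

/-- Proposition 1: there exist a finite nonempty set of users
(`Fin (n+1)`), reputations `c₀`, and two attribute maps `f`, `g` into finite class
sets, with all relevant class standard deviations nonzero, such that applying the
single-attribute adjustment of Eq. (2) sequentially — first for `f` (giving `c₁`),
then for `g` (giving `c₂`) — leaves two nonempty classes of `f` whose averages of the
final reputations `c₂` differ. -/
theorem sequential_single_attribute_mitigation_not_independent :
    ∃ (n p q : ℕ) (c₀ : Fin (n + 1) → ℝ)
      (f : Fin (n + 1) → Fin (p + 1)) (g : Fin (n + 1) → Fin (q + 1))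
      (c₁ c₂ : Fin (n + 1) → ℝ),
      (∀ a : Fin (p + 1), (Finset.univ.filter (fun u => f u = a)).Nonempty →
        std (Finset.univ.filter (fun u => f u = a)) c₀ ≠ 0) ∧
      (∀ u, c₁ u = avg Finset.univ c₀ +
        (c₀ u - avg (Finset.univ.filter (fun v => f v = f u)) c₀) *
          std Finset.univ c₀ / std (Finset.univ.filter (fun v => f v = f u)) c₀) ∧
      (∀ b : Fin (q + 1), (Finset.univ.filter (fun u => g u = b)).Nonempty →
        std (Finset.univ.filter (fun u => g u = b)) c₁ ≠ 0) ∧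
      (∀ u, c₂ u = avg Finset.univ c₁ +
        (c₁ u - avg (Finset.univ.filter (fun v => g v = g u)) c₁) *
          std Finset.univ c₁ / std (Finset.univ.filter (fun v => g v = g u)) c₁) ∧
      ∃ a a' : Fin (p + 1),
        (Finset.univ.filter (fun u => f u = a)).Nonempty ∧
        (Finset.univ.filter (fun u => f u = a')).Nonempty ∧
        avg (Finset.univ.filter (fun u => f u = a)) c₂ ≠
          avg (Finset.univ.filter (fun u => f u = a')) c₂ :=
  ⟨5, 1, 1, C0, F6, G6, C0, C2, main_example⟩
end
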